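/- arXiv:math/0503651 — 3 statements merged into one kernel-verified Lean document; each statement's English description precedes it below -/
import Mathlib

section
/- If φ belongs to the class Φ, then both the derivative φ' and the function x ↦ (φ(x) − φ(0))/x are concave on (0, ∞). -/
open Real

/-- The class `Φ`: `φ : [0,∞) → ℝ` continuous and convex on `[0,∞)`, twice differentiable on
`(0,∞)` (with first and second derivatives `φ'` and `φ''`), and either `φ` is affine or
`φ'' > 0` on `(0,∞)` and `1/φ''` is concave on `(0,∞)`. -/
structure MemPhiClass (φ φ' φ'' : ℝ → ℝ) : Prop where
  cont : ContinuousOn φ (Set.Ici 0)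
  convex : ConvexOn ℝ (Set.Ici 0) φ
  deriv1 : ∀ x ∈ Set.Ioi (0 : ℝ), HasDerivAt φ (φ' x) x
  deriv2 : ∀ x ∈ Set.Ioi (0 : ℝ), HasDerivAt φ' (φ'' x) x
  affine_or : (∃ a b : ℝ, ∀ x ∈ Set.Ici (0 : ℝ), φ x = a * x + b) ∨
    ((∀ x ∈ Set.Ioi (0 : ℝ), 0 < φ'' x) ∧
      ConcaveOn ℝ (Set.Ioi 0) (fun x => 1 / φ'' x))

/-!
Since `1/φ''` is positive and concave on `(0,∞)` it is nondecreasing, so `φ''` is nonincreasing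
(in the affine case `φ'' = 0`) and `φ'` is concave. For `ψ x = (φ x - φ 0) / x` one has
`x³ ψ'' x = x² φ'' x - 2 (x φ' x - (φ x - φ 0))`, and integrating the tangent-line bound
`φ' t ≤ φ' x + φ'' x (t - x)` of the concave `φ'` over `[0, x]` shows that this is nonpositive.
-/

open Set

theorem ConcaveOn.monotoneOn_Ioi_of_bddBelow {g : ℝ → ℝ} {a : ℝ} (hg : ConcaveOn ℝ (Ioi a) g)
    (hbdd : BddBelow (g '' Ioi a)) : MonotoneOn g (Ioi a) := by
  obtain ⟨c, hc⟩ := hbdd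
  replace hc : ∀ x ∈ Ioi a, c ≤ g x := fun x hx => hc (mem_image_of_mem g hx)
  intro x hx y hy hxy
  rcases hxy.eq_or_lt with rfl | hxy
  · rfl
  by_contra! hlt
  set s := (g x - g y) / (y - x) with hs_def
  have hs : 0 < s := div_pos (by linarith) (by linarith)
  -- far enough to the right, the chord of slope `≤ -s` through `y` drops below `c`
  set z := y + (g y - c + 1) / s with hz_def
  have hyz : y < z := lt_add_of_pos_right _ (div_pos (by linarith [hc y hy]) hs)
  have hslope := hg.slope_anti_adjacent hx (mem_Ioi.2 (hy.trans hyz)) hxy hyz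
  have hdrop : s * (z - y) = g y - c + 1 := by
    rw [hz_def]; field_simp; ring
  rw [div_le_iff₀ (sub_pos.2 hyz), show (g y - g x) / (y - x) = -s by rw [hs_def]; ring] at hslope
  linarith [hc z (mem_Ioi.2 (hy.trans hyz))]

theorem AntitoneOn.concaveOn_of_hasDerivAt {D : Set ℝ} (hD : Convex ℝ D) {f f' : ℝ → ℝ}
    (hf : ContinuousOn f D) (hf' : ∀ x ∈ interior D, HasDerivAt f (f' x) x)
    (h_anti : AntitoneOn f' (interior D)) : ConcaveOn ℝ D f :=
  AntitoneOn.concaveOn_of_deriv hD hf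
    (fun x hx => (hf' x hx).differentiableAt.differentiableWithinAt)
    (fun x hx y hy hxy => by rw [(hf' x hx).deriv, (hf' y hy).deriv]; exact h_anti hx hy hxy)

theorem sub_le_sub_of_hasDerivAt_le {f g f' g' : ℝ → ℝ} {a b : ℝ} (hab : a ≤ b)
    (hf : ContinuousOn f (Icc a b)) (hg : ContinuousOn g (Icc a b))
    (hf' : ∀ x ∈ Ioo a b, HasDerivAt f (f' x) x) (hg' : ∀ x ∈ Ioo a b, HasDerivAt g (g' x) x)
    (hle : ∀ x ∈ Ioo a b, f' x ≤ g' x) : f b - f a ≤ g b - g a := by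
  have hmono : MonotoneOn (g - f) (Icc a b) := by
    refine monotoneOn_of_hasDerivWithinAt_nonneg (f' := g' - f') (convex_Icc a b) (hg.sub hf) ?_ ?_
    · simp only [interior_Icc]
      exact fun x hx => ((hg' x hx).sub (hf' x hx)).hasDerivWithinAt
    · simp only [interior_Icc]
      exact fun x hx => sub_nonneg.2 (hle x hx)
  have := hmono (left_mem_Icc.2 hab) (right_mem_Icc.2 hab) hab
  simp only [Pi.sub_apply] at this
  linarith

theorem ConcaveOn.sub_le_of_hasDerivAt {g g' : ℝ → ℝ} {a b g''b : ℝ} (hab : a < b)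
    (hg : ContinuousOn g (Icc a b)) (hg' : ∀ x ∈ Ioc a b, HasDerivAt g (g' x) x)
    (hconc : ConcaveOn ℝ (Ioc a b) g') (hg''b : HasDerivAt g' g''b b) :
    g b - g a ≤ (b - a) * g' b - (b - a) ^ 2 * g''b / 2 := by
  have hb : b ∈ Ioc a b := right_mem_Ioc.2 hab
  have htangent : ∀ t ∈ Ioo a b, g' t ≤ g' b + g''b * (t - b) := by
    intro t ht
    have h := hconc.le_slope_of_hasDerivAt (Ioo_subset_Ioc_self ht) hb ht.2 hg''b
    rw [slope_def_field, le_div_iff₀ (sub_pos.2 ht.2)] at h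
    linarith
  have hquad : ∀ t, HasDerivAt (fun s => g' b * s + g''b * (s - b) ^ 2 / 2)
      (g' b + g''b * (t - b)) t := fun t =>
    (((hasDerivAt_id t).const_mul (g' b)).add
      ((((hasDerivAt_id t).sub_const b).pow 2).const_mul g''b |>.div_const 2)).congr_deriv
      (by simp only [id, Nat.cast_ofNat]; ring)
  have := sub_le_sub_of_hasDerivAt_le hab.le hg
    (fun t _ => (hquad t).continuousAt.continuousWithinAt)
    (fun t ht => hg' t (Ioo_subset_Ioc_self ht)) (fun t _ => hquad t) htangent
  linarith

theorem concaveOn_div_of_concaveOn_deriv {g g' g'' : ℝ → ℝ} (hg : ContinuousOn g (Ici 0))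
    (hg' : ∀ x ∈ Ioi 0, HasDerivAt g (g' x) x) (hg'' : ∀ x ∈ Ioi 0, HasDerivAt g' (g'' x) x)
    (hconc : ConcaveOn ℝ (Ioi 0) g') : ConcaveOn ℝ (Ioi 0) (fun x => (g x - g 0) / x) := by
  have hψ' : ∀ x ∈ Ioi (0 : ℝ), HasDerivAt (fun x => (g x - g 0) / x)
      ((x * g' x - (g x - g 0)) / x ^ 2) x := fun x hx =>
    (((hg' x hx).sub_const (g 0)).div (hasDerivAt_id x) hx.ne').congr_deriv
      (by simp only [id]; ring)
  have hψ'' : ∀ x ∈ Ioi (0 : ℝ), HasDerivAt (fun x => (x * g' x - (g x - g 0)) / x ^ 2)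
      ((x ^ 2 * g'' x - 2 * (x * g' x - (g x - g 0))) / x ^ 3) x := fun x hx =>
    ((((hasDerivAt_id x).mul (hg'' x hx)).sub ((hg' x hx).sub_const (g 0))).div
      ((hasDerivAt_id x).pow 2) (pow_ne_zero 2 hx.ne')).congr_deriv (by
        have : x ≠ 0 := hx.ne'
        simp only [Pi.pow_apply, Pi.mul_apply, Pi.sub_apply, id, Nat.cast_ofNat]
        field_simp
        ring)
  have htaylor : ∀ x ∈ Ioi (0 : ℝ), g x - g 0 ≤ x * g' x - x ^ 2 * g'' x / 2 := fun x hx => by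
    simpa using hconc.subset Ioc_subset_Ioi_self (convex_Ioc 0 x) |>.sub_le_of_hasDerivAt hx
      (hg.mono Icc_subset_Ici_self) (fun t ht => hg' t ht.1) (hg'' x hx)
  refine concaveOn_of_hasDerivWithinAt2_nonpos (convex_Ioi 0)
    (fun x hx => (hψ' x hx).continuousAt.continuousWithinAt)
    (fun x hx => (hψ' x (interior_subset hx)).hasDerivWithinAt)
    (fun x hx => (hψ'' x (interior_subset hx)).hasDerivWithinAt) (fun x hx => ?_)
  rw [interior_Ioi] at hx
  exact div_nonpos_of_nonpos_of_nonneg (by linarith [htaylor x hx]) (pow_pos hx 3).le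

namespace MemPhiClass

variable {φ φ' φ'' : ℝ → ℝ}

theorem deriv2_eq_zero_of_affine (hφ : MemPhiClass φ φ' φ'') {a b : ℝ}
    (hab : ∀ x ∈ Ici (0 : ℝ), φ x = a * x + b) : ∀ x ∈ Ioi (0 : ℝ), φ'' x = 0 := by
  have hφ' : ∀ x ∈ Ioi (0 : ℝ), φ' x = a := fun x hx =>
    (hφ.deriv1 x hx).unique <|
      ((((hasDerivAt_id x).const_mul a).add_const b).congr_deriv (mul_one a)).congr_of_eventuallyEq
        (Filter.eventually_of_mem (Ioi_mem_nhds hx) fun y hy => hab y (Ioi_subset_Ici_self hy))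
  exact fun x hx => (hφ.deriv2 x hx).unique <|
    (hasDerivAt_const x a).congr_of_eventuallyEq (Filter.eventually_of_mem (Ioi_mem_nhds hx) hφ')

theorem antitoneOn_deriv2 (hφ : MemPhiClass φ φ' φ'') : AntitoneOn φ'' (Ioi 0) := by
  rcases hφ.affine_or with ⟨a, b, hab⟩ | ⟨hpos, hconc⟩
  · intro x hx y hy _
    rw [hφ.deriv2_eq_zero_of_affine hab x hx, hφ.deriv2_eq_zero_of_affine hab y hy]
  · intro x hx y hy hxy
    have hmono := hconc.monotoneOn_Ioi_of_bddBelow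
      ⟨0, forall_mem_image.2 fun z hz => (one_div_pos.2 (hpos z hz)).le⟩
    exact (one_div_le_one_div (hpos x hx) (hpos y hy)).1 (hmono hx hy hxy)

theorem concaveOn_deriv1 (hφ : MemPhiClass φ φ' φ'') : ConcaveOn ℝ (Ioi 0) φ' :=
  AntitoneOn.concaveOn_of_hasDerivAt (convex_Ioi 0)
    (fun x hx => (hφ.deriv2 x hx).continuousAt.continuousWithinAt)
    (fun x hx => hφ.deriv2 x (interior_subset hx))
    (by rw [interior_Ioi]; exact hφ.antitoneOn_deriv2)

end MemPhiClass

/-- **Proposition 2** (Boucheron–Bousquet–Lugosi–Massart). If `φ ∈ Φ`, then both `φ'` and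
`x ↦ (φ(x) - φ(0))/x` are concave on `(0, ∞)`. -/
theorem proposition2_concavity
    (φ φ' φ'' : ℝ → ℝ) (hφ : MemPhiClass φ φ' φ'') :
    ConcaveOn ℝ (Set.Ioi 0) φ' ∧
      ConcaveOn ℝ (Set.Ioi 0) (fun x => (φ x - φ 0) / x) := by
  have hφ' := hφ.concaveOn_deriv1
  exact ⟨hφ', concaveOn_div_of_concaveOn_deriv hφ.cont hφ.deriv1 hφ.deriv2 hφ'⟩
end

section
/- Let a_1,…,a_n be nonnegative real constants and let X_1,…,X_n be independent Rademacher random variables, i.e., P(X_i = 1) = P(X_i = −1) = 1/2. Set Z = ∑_{i=1}^n a_i·X_i. Then for every integer q ≥ 2, ‖Z₊‖_q = ‖Z₋‖_q ≤ √(2Kq)·√(∑_{i=1}^n a_i²) and ‖Z‖_q ≤ 2^{1/q}·√(2Kq)·√(∑_{i=1}^n a_i²), where K = 1/(e − √e). -/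
/-!
Each `aᵢ Xᵢ` has moment generating function `cosh (t aᵢ) ≤ exp (t² aᵢ² / 2)`, so by independence
`Z` is sub-Gaussian with variance proxy `v = ∑ aᵢ²`. Integrating the pointwise bound
`|z|^q ≤ (q / (e θ))^q (e^{θz} + e^{-θz})` and choosing `θ = √(q / v)` gives
`E|Z|^q ≤ 2 (q v / e)^{q/2}`. Flipping the signs of all `Xᵢ` preserves their joint law, so `Z` and
`-Z` are identically distributed: `Z₊` and `Z₋` have the same law and each carries half of
`E|Z|^q`. The constant `K` only enters through `1 / e ≤ 2 K`.
-/

open MeasureTheory ProbabilityTheory Real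

/-- `lqNorm μ Y q = (E[|Y|^q])^(1/q)`. -/
noncomputable def lqNorm {Ω : Type*} [MeasurableSpace Ω] (μ : Measure Ω) (Y : Ω → ℝ) (q : ℝ) : ℝ :=
  (∫ ω, |Y ω| ^ q ∂μ) ^ (1 / q)

open scoped ENNReal NNReal

lemma Real.rpow_le_div_exp_one_rpow_mul_exp {x p : ℝ} (hx : 0 ≤ x) (hp : 0 < p) :
    x ^ p ≤ (p / exp 1) ^ p * exp x := by
  have hlin : x ≤ p / exp 1 * exp (x / p) := by
    have := add_one_le_exp (x / p - 1)
    rw [exp_sub, sub_add_cancel, div_le_div_iff₀ hp (exp_pos 1)] at this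
    rw [div_mul_eq_mul_div, le_div_iff₀ (exp_pos 1)]
    linarith
  calc x ^ p ≤ (p / exp 1 * exp (x / p)) ^ p := by gcongr
    _ = (p / exp 1) ^ p * exp x := by
      rw [mul_rpow (by positivity) (exp_pos _).le, ← exp_mul, div_mul_cancel₀ x hp.ne']

lemma Real.abs_rpow_le_mul_exp_add_exp {z p θ : ℝ} (hp : 0 < p) (hθ : 0 < θ) :
    |z| ^ p ≤ (p / (exp 1 * θ)) ^ p * (exp (θ * z) + exp (-θ * z)) := by
  have hexp : exp (θ * |z|) ≤ exp (θ * z) + exp (-θ * z) := by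
    rcases abs_cases z with ⟨hz, -⟩ | ⟨hz, -⟩ <;> rw [hz]
    · linarith [exp_pos (-θ * z)]
    · rw [mul_neg, ← neg_mul]; linarith [exp_pos (θ * z)]
  calc |z| ^ p = (θ * |z|) ^ p / θ ^ p := by
        rw [mul_rpow hθ.le (abs_nonneg z), mul_div_cancel_left₀ _ (rpow_pos_of_pos hθ p).ne']
    _ ≤ (p / exp 1) ^ p * exp (θ * |z|) / θ ^ p := by
        gcongr; exact rpow_le_div_exp_one_rpow_mul_exp (by positivity) hp
    _ = (p / (exp 1 * θ)) ^ p * exp (θ * |z|) := by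
        rw [← div_div, div_rpow (by positivity) hθ.le]; ring
    _ ≤ (p / (exp 1 * θ)) ^ p * (exp (θ * z) + exp (-θ * z)) := by gcongr

lemma Real.abs_rpow_eq_abs_max_rpow_add (z : ℝ) {p : ℝ} (hp : p ≠ 0) :
    |z| ^ p = |max z 0| ^ p + |max (-z) 0| ^ p := by
  rcases le_total 0 z with hz | hz <;> simp [hz, zero_rpow hp]

lemma Real.inv_exp_one_le_two_mul_one_div_exp_one_sub_sqrt :
    (exp 1)⁻¹ ≤ 2 * (1 / (exp 1 - √(exp 1))) := by
  have he : 0 < exp 1 - √(exp 1) := sub_pos.2 (sqrt_lt_self_iff.2 (one_lt_exp_iff.2 one_pos))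
  rw [one_div]
  linarith [inv_anti₀ he (sub_le_self _ (sqrt_nonneg (exp 1))), inv_pos.2 he]

lemma Real.sqrt_mul_div_exp_one_le {v q K : ℝ} (hv : 0 ≤ v) (hq : 0 ≤ q)
    (hK : (exp 1)⁻¹ ≤ 2 * K) : √(v * q / exp 1) ≤ √(2 * K * q) * √v := by
  rw [← sqrt_mul (mul_nonneg ((inv_pos.2 (exp_pos 1)).le.trans hK) hq)]
  refine sqrt_le_sqrt ?_
  calc v * q / exp 1 = (exp 1)⁻¹ * q * v := by ring
    _ ≤ 2 * K * q * v := by gcongr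

lemma lqNorm_le_of_integral_le {Ω : Type*} [MeasurableSpace Ω] {μ : Measure Ω} {Y : Ω → ℝ}
    {p C B : ℝ} (hp : 0 < p) (hC : 0 ≤ C) (hB : 0 ≤ B)
    (h : ∫ ω, |Y ω| ^ p ∂μ ≤ C * B ^ p) :
    lqNorm μ Y p ≤ C ^ (1 / p) * B := by
  calc lqNorm μ Y p ≤ (C * B ^ p) ^ (1 / p) :=
        rpow_le_rpow (integral_nonneg fun ω => by positivity) h (by positivity)
    _ = C ^ (1 / p) * B := by
        rw [mul_rpow hC (by positivity), ← rpow_mul hB, mul_one_div_cancel hp.ne', rpow_one]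

namespace ProbabilityTheory

variable {Ω : Type*} [MeasurableSpace Ω] {μ : Measure Ω}

lemma IdentDistrib.lqNorm_eq {Ω' : Type*} [MeasurableSpace Ω'] {ν : Measure Ω'} {Y : Ω → ℝ}
    {Y' : Ω' → ℝ} (h : IdentDistrib Y Y' μ ν) (p : ℝ) : lqNorm μ Y p = lqNorm ν Y' p :=
  congrArg (· ^ (1 / p)) (h.comp (measurable_abs.pow_const p)).integral_eq

lemma IdentDistrib.two_mul_integral_abs_max_rpow {Z : Ω → ℝ}
    (h : IdentDistrib Z (fun ω => -Z ω) μ μ) {p : ℝ} (hp : 0 < p)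
    (hint : Integrable (fun ω => |Z ω| ^ p) μ) :
    2 * ∫ ω, |max (Z ω) 0| ^ p ∂μ = ∫ ω, |Z ω| ^ p ∂μ := by
  have hZ := h.aemeasurable_fst
  have hsplit (ω : Ω) := abs_rpow_eq_abs_max_rpow_add (Z ω) hp.ne'
  have hpos : Integrable (fun ω => |max (Z ω) 0| ^ p) μ :=
    hint.mono (by fun_prop (disch := exact hp.le)) (ae_of_all _ fun ω => by
      rw [norm_of_nonneg (by positivity), norm_of_nonneg (by positivity), hsplit ω]
      exact le_add_of_nonneg_right (by positivity))
  have hneg : Integrable (fun ω => |max (-Z ω) 0| ^ p) μ :=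
    hint.mono (by fun_prop (disch := exact hp.le)) (ae_of_all _ fun ω => by
      rw [norm_of_nonneg (by positivity), norm_of_nonneg (by positivity), hsplit ω]
      exact le_add_of_nonneg_left (by positivity))
  have hsymm : ∫ ω, |max (-Z ω) 0| ^ p ∂μ = ∫ ω, |max (Z ω) 0| ^ p ∂μ :=
    (h.comp (u := fun z : ℝ => |max z 0| ^ p) (by fun_prop)).integral_eq.symm
  rw [integral_congr_ae (ae_of_all _ hsplit), integral_add hpos hneg, hsymm, two_mul]

namespace HasSubgaussianMGF

variable {Z : Ω → ℝ} {c : ℝ≥0} {p : ℝ}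

lemma integrable_abs_rpow (h : HasSubgaussianMGF Z c μ) (hp : 0 < p) :
    Integrable (fun ω => |Z ω| ^ p) μ := by
  simpa [hp.le] using (h.memLp p.toNNReal).integrable_norm_rpow (by simpa using hp) (by simp)

lemma integral_abs_rpow_le (h : HasSubgaussianMGF Z c μ) (hp : 0 < p) :
    ∫ ω, |Z ω| ^ p ∂μ ≤ 2 * √(c * p / exp 1) ^ p := by
  rcases eq_zero_or_pos c with rfl | hc
  · rw [integral_congr_ae (h.ae_eq_zero_of_hasSubgaussianMGF_zero.mono fun ω hω => by
      rw [hω, Pi.zero_apply, abs_zero, zero_rpow hp.ne'])]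
    simp only [integral_zero]; positivity
  set θ := √(p / c)
  have hθ : 0 < θ := sqrt_pos.2 (by positivity)
  have hθsq : θ ^ 2 = p / c := sq_sqrt (by positivity)
  have hexponent : c * θ ^ 2 / 2 = p / 2 := by rw [hθsq]; field_simp
  set C := (p / (exp 1 * θ)) ^ p
  calc ∫ ω, |Z ω| ^ p ∂μ ≤ ∫ ω, C * (exp (θ * Z ω) + exp (-θ * Z ω)) ∂μ :=
        integral_mono_of_nonneg (ae_of_all _ fun ω => by positivity)
          (((h.integrable_exp_mul θ).add (h.integrable_exp_mul (-θ))).const_mul C)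
          (ae_of_all _ fun ω => abs_rpow_le_mul_exp_add_exp hp hθ)
    _ = C * (mgf Z μ θ + mgf Z μ (-θ)) := by
        rw [integral_const_mul, integral_add (h.integrable_exp_mul θ) (h.integrable_exp_mul (-θ))]
        rfl
    _ ≤ C * (exp (p / 2) + exp (p / 2)) := by
        have h₁ := h.mgf_le θ
        have h₂ := h.mgf_le (-θ)
        rw [hexponent] at h₁
        rw [neg_sq, hexponent] at h₂
        gcongr
    _ = 2 * (p / (exp 1 * θ) * exp (1 / 2)) ^ p := by
        rw [mul_rpow (by positivity) (exp_pos _).le, ← exp_mul, one_div_mul_eq_div]; ring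
    _ = 2 * √(c * p / exp 1) ^ p := by
        congr 2
        rw [eq_comm, sqrt_eq_iff_eq_sq (by positivity) (by positivity), mul_pow, div_pow, mul_pow,
          hθsq, exp_half, sq_sqrt (exp_pos 1).le]
        field_simp

end HasSubgaussianMGF

noncomputable def rademacher : Measure ℝ :=
  (2⁻¹ : ℝ≥0∞) • (Measure.dirac 1 + Measure.dirac (-1))

lemma integral_rademacher (f : ℝ → ℝ) : ∫ x, f x ∂rademacher = (f 1 + f (-1)) / 2 := by
  rw [rademacher, integral_smul_measure,
    integral_add_measure (integrable_dirac (by simp)) (integrable_dirac (by simp))]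
  simp [integral_dirac]; ring

lemma hasSubgaussianMGF_const_mul_rademacher (r : ℝ) :
    HasSubgaussianMGF (fun x => r * x) (‖r‖₊ ^ 2) rademacher where
  integrable_exp_mul t := by
    refine Integrable.smul_measure (Integrable.add_measure ?_ ?_) (by simp) <;>
      exact integrable_dirac (by simp)
  mgf_le t := by
    calc mgf (fun x => r * x) rademacher t = cosh (t * r) := by
          rw [mgf, integral_rademacher, cosh_eq]; simp
      _ ≤ _ := by simpa [mul_pow, mul_comm] using cosh_le_exp_half_sq (t * r)

lemma hasLaw_neg_rademacher : HasLaw (fun x => -x) rademacher rademacher where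
  map_eq := by
    simp [rademacher, Measure.map_smul, Measure.map_add _ _ measurable_neg,
      Measure.map_dirac' measurable_neg, add_comm]

lemma hasLaw_rademacher_of_measure_eq [IsProbabilityMeasure μ] {X : Ω → ℝ} (hX : Measurable X)
    (h₁ : μ {ω | X ω = 1} = 1 / 2) (h₂ : μ {ω | X ω = -1} = 1 / 2) :
    HasLaw X rademacher μ where
  aemeasurable := hX.aemeasurable
  map_eq := by
    have hm (x : ℝ) : MeasurableSet {ω | X ω = x} := hX (measurableSet_singleton x)
    have hae : ∀ᵐ ω ∂μ, X ω = 1 ∨ X ω = -1 := by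
      rw [ae_iff_measure_eq (p := fun ω => X ω = 1 ∨ X ω = -1)
        ((hm 1).union (hm (-1))).nullMeasurableSet, Set.ofPred_or,
        measure_union _ (hm (-1)), h₁, h₂, ENNReal.add_halves, measure_univ]
      exact Set.disjoint_left.2 fun ω (h : X ω = 1) (h' : X ω = -1) => by linarith
    rw [(Measure.ae_eq_or_eq_iff_map_eq_dirac_add_dirac hX.aemeasurable (by norm_num)).1 hae,
      rademacher, smul_add]
    simp only [Set.preimage, Set.mem_singleton_iff, h₁, h₂, one_div]

section RademacherSum

variable {ι : Type*} [Fintype ι] {X : ι → Ω → ℝ}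

lemma identDistrib_neg_of_rademacher (hX : ∀ i, HasLaw (X i) rademacher μ)
    (hindep : iIndepFun X μ) :
    IdentDistrib (fun ω i => X i ω) (fun ω i => -X i ω) μ μ := by
  have hlaw := hindep.hasLaw_pi hX
  have hlaw_neg := (hindep.comp (fun _ x => -x) fun _ => measurable_neg).hasLaw_pi
    fun i => hasLaw_neg_rademacher.comp (hX i)
  exact ⟨hlaw.aemeasurable, hlaw_neg.aemeasurable, hlaw.map_eq.trans hlaw_neg.map_eq.symm⟩

lemma identDistrib_sum_mul_neg_of_rademacher (hX : ∀ i, HasLaw (X i) rademacher μ)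
    (hindep : iIndepFun X μ) (a : ι → ℝ) :
    IdentDistrib (fun ω => ∑ i, a i * X i ω) (fun ω => -∑ i, a i * X i ω) μ μ := by
  convert (identDistrib_neg_of_rademacher hX hindep).comp
    (u := fun x => ∑ i, a i * x i) (by fun_prop) using 1 <;> ext ω <;> simp

lemma hasSubgaussianMGF_sum_mul_of_rademacher (hX : ∀ i, HasLaw (X i) rademacher μ)
    (hindep : iIndepFun X μ) (a : ι → ℝ) :
    HasSubgaussianMGF (fun ω => ∑ i, a i * X i ω) (∑ i, ‖a i‖₊ ^ 2) μ :=
  HasSubgaussianMGF.sum_of_iIndepFun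
    (hindep.comp (fun i x => a i * x) fun i => measurable_const_mul (a i)) fun i _ =>
    .of_map (hX i).aemeasurable ((hX i).map_eq ▸ hasSubgaussianMGF_const_mul_rademacher (a i))

end RademacherSum

end ProbabilityTheory

theorem theorem7_khinchine_general
    {Ω : Type*} [MeasurableSpace Ω]
    (μ : Measure Ω) [IsProbabilityMeasure μ] (n : ℕ)
    (a : Fin n → ℝ)
    (X : Fin n → Ω → ℝ)
    (hX : ∀ i, Measurable (X i))
    (hindep : iIndepFun X μ)
    -- each `Xᵢ` is a Rademacher variable
    (hrad : ∀ i, μ {ω | X i ω = 1} = 1 / 2 ∧ μ {ω | X i ω = -1} = 1 / 2)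
    (Z : Ω → ℝ) (hZ : Z = fun ω => ∑ i, a i * X i ω)
    (K : ℝ) (hK : K = 1 / (Real.exp 1 - Real.sqrt (Real.exp 1))) :
    ∀ q : ℕ, 2 ≤ q →
      lqNorm μ (fun ω => max (Z ω) 0) q = lqNorm μ (fun ω => max (-Z ω) 0) q ∧
      lqNorm μ (fun ω => max (Z ω) 0) q ≤
        Real.sqrt (2 * K * q) * Real.sqrt (∑ i, a i ^ 2) ∧
      lqNorm μ Z q ≤
        (2 : ℝ) ^ (1 / (q : ℝ)) * Real.sqrt (2 * K * q) * Real.sqrt (∑ i, a i ^ 2) := by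
  intro q hq
  have hq0 : (0 : ℝ) < q := by positivity
  have hlaw i := hasLaw_rademacher_of_measure_eq (hX i) (hrad i).1 (hrad i).2
  have hsymm : IdentDistrib Z (fun ω => -Z ω) μ μ :=
    hZ ▸ identDistrib_sum_mul_neg_of_rademacher hlaw hindep a
  have hsub : HasSubgaussianMGF Z (∑ i, ‖a i‖₊ ^ 2) μ :=
    hZ ▸ hasSubgaussianMGF_sum_mul_of_rademacher hlaw hindep a
  set v := ∑ i, a i ^ 2
  have hv : 0 ≤ v := Finset.sum_nonneg fun i _ => sq_nonneg (a i)
  have hmom : ∫ ω, |Z ω| ^ (q : ℝ) ∂μ ≤ 2 * √(v * q / exp 1) ^ (q : ℝ) := by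
    simpa [v] using hsub.integral_abs_rpow_le hq0
  have hhalf := hsymm.two_mul_integral_abs_max_rpow hq0 (hsub.integrable_abs_rpow hq0)
  have hK' : √(v * q / exp 1) ≤ √(2 * K * q) * √v :=
    sqrt_mul_div_exp_one_le hv hq0.le (hK ▸ inv_exp_one_le_two_mul_one_div_exp_one_sub_sqrt)
  refine ⟨(hsymm.comp (u := fun z => max z 0) (by fun_prop)).lqNorm_eq q, ?_, ?_⟩
  · calc lqNorm μ (fun ω => max (Z ω) 0) q ≤ 1 ^ (1 / (q : ℝ)) * √(v * q / exp 1) :=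
          lqNorm_le_of_integral_le hq0 zero_le_one (sqrt_nonneg _) (by linarith)
      _ ≤ _ := by rw [one_rpow, one_mul]; exact hK'
  · calc lqNorm μ Z q ≤ 2 ^ (1 / (q : ℝ)) * √(v * q / exp 1) :=
          lqNorm_le_of_integral_le hq0 zero_le_two (sqrt_nonneg _) hmom
      _ ≤ _ := by rw [mul_assoc]; gcongr

/-- **Theorem 7** (Khinchine's inequality). For nonnegative constants `aᵢ` and independent
Rademacher variables `Xᵢ`, if `Z = ∑ aᵢ Xᵢ`, then for all integers `q ≥ 2`,
`‖Z₊‖_q = ‖Z₋‖_q ≤ √(2Kq) √(∑ aᵢ²)` and `‖Z‖_q ≤ 2^{1/q} √(2Kq) √(∑ aᵢ²)`. -/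
theorem theorem7_khinchine
    {Ω : Type*} [MeasurableSpace Ω]
    (μ : Measure Ω) [IsProbabilityMeasure μ] (n : ℕ)
    (a : Fin n → ℝ) (ha : ∀ i, 0 ≤ a i)
    (X : Fin n → Ω → ℝ)
    (hX : ∀ i, Measurable (X i))
    (hindep : iIndepFun X μ)
    -- each `Xᵢ` is a Rademacher variable
    (hrad : ∀ i, μ {ω | X i ω = 1} = 1 / 2 ∧ μ {ω | X i ω = -1} = 1 / 2)
    (Z : Ω → ℝ) (hZ : Z = fun ω => ∑ i, a i * X i ω)
    (K : ℝ) (hK : K = 1 / (Real.exp 1 - Real.sqrt (Real.exp 1))) :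
    ∀ q : ℕ, 2 ≤ q →
      lqNorm μ (fun ω => max (Z ω) 0) q = lqNorm μ (fun ω => max (-Z ω) 0) q ∧
      lqNorm μ (fun ω => max (Z ω) 0) q ≤
        Real.sqrt (2 * K * q) * Real.sqrt (∑ i, a i ^ 2) ∧
      lqNorm μ Z q ≤
        (2 : ℝ) ^ (1 / (q : ℝ)) * Real.sqrt (2 * K * q) * Real.sqrt (∑ i, a i ^ 2) :=
  theorem7_khinchine_general μ n a X hX hindep hrad Z hZ K hK
end

section
/- Let X_1,…,X_n be independent centered real random variables (E[X_i] = 0 for all i). Set Z = ∑_{i=1}^n X_i, σ² = ∑_{i=1}^n E[X_i²], and Y = max_{1≤i≤n} |X_i|. Then for every integer q ≥ 2 and every θ ∈ (0,1), ‖Z₊‖_q ≤ σ·√(2·κ·(2 + θ)·q) + q·κ·√(1 + 1/θ)·‖Y‖_q. -/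
open MeasureTheory ProbabilityTheory Real Finset

/-!
With `φ(z) = z |z|^k` one has `E|Z|^(k+2) = ∑ᵢ E[Xᵢ φ(Z)]`, and since `Xᵢ` is centered and
independent of `Z - Xᵢ`, `φ(Z)` may be replaced by `φ(Z) - φ(Z - Xᵢ)`. The Lipschitz bound
`|φ a - φ b| ≤ (k+1) |a - b| max(|a|,|b|)^k` and the binomial theorem then give
`E|Z|^(k+2) ≤ (k+1) ∑ᵢ ∑ⱼ C(k,j) E|Xᵢ|^(j+2) E|Z - Xᵢ|^(k-j)`, a recursion in the moment
order over all partial sums. Truncating `Xᵢ` at level `t` and comparing it with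
`Yᵢ = max_{j≠i} |Xⱼ|`, which is independent of `Xᵢ`, gives
`∑ᵢ E|Xᵢ|^(j+2) ≤ (2σ² + t²) t^j` whenever `E Y^(j+2) ≤ t^(j+2)`. With `t` slightly above
`‖Y‖_q`, the recursion closes (`E|Z|^k ≤ T^k` for all `k ≤ q`) as soon as `T² ≥ 5 q σ²` and
`8 T² ≥ 25 q² t²`, which holds for `T = σ √(2κ(2+θ)q) + q κ √(1+1/θ) t` because `κ ≥ 5/4`
and `θ < 1`.
-/

namespace Rosenthal

def signedPow (k : ℕ) (z : ℝ) : ℝ := z * |z| ^ k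

lemma mul_signedPow_self (k : ℕ) (z : ℝ) : z * signedPow k z = |z| ^ (k + 2) := by
  rw [signedPow, ← mul_assoc, ← sq, ← sq_abs, ← pow_add, add_comm]

lemma abs_signedPow (k : ℕ) (z : ℝ) : |signedPow k z| = |z| ^ (k + 1) := by
  rw [signedPow, abs_mul, abs_pow, abs_abs, pow_succ']

lemma continuous_signedPow (k : ℕ) : Continuous (signedPow k) :=
  continuous_id.mul (continuous_abs.pow k)

lemma abs_signedPow_sub_le (k : ℕ) (a b : ℝ) :
    |signedPow k a - signedPow k b| ≤ (k + 1) * |a - b| * max |a| |b| ^ k := by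
  wlog hba : |b| ≤ |a| generalizing a b
  · have := this b a (le_of_not_ge hba)
    rwa [abs_sub_comm, abs_sub_comm b a, max_comm] at this
  have hk : 0 ≤ |a| ^ k - |b| ^ k := sub_nonneg.2 (pow_le_pow_left₀ (abs_nonneg b) hba k)
  have hb : |b| * (|a| ^ k - |b| ^ k) ≤ k * |a - b| * |a| ^ k := by
    rcases k with _ | k
    · simp
    have h := abs_pow_sub_pow_le (a := |a|) (b := |b|) (n := k + 1)
    rw [abs_of_nonneg hk, abs_abs, abs_abs, max_eq_left hba, Nat.add_sub_cancel] at h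
    calc |b| * (|a| ^ (k + 1) - |b| ^ (k + 1))
        ≤ |b| * (|a - b| * (k + 1 : ℕ) * |a| ^ k) :=
          mul_le_mul_of_nonneg_left
            (h.trans (by gcongr ?_ * _ * _; exact abs_abs_sub_abs_le_abs_sub a b)) (abs_nonneg b)
      _ ≤ |a| * (|a - b| * (k + 1 : ℕ) * |a| ^ k) := by gcongr
      _ = (k + 1 : ℕ) * |a - b| * |a| ^ (k + 1) := by ring
  calc |signedPow k a - signedPow k b| = |(a - b) * |a| ^ k + b * (|a| ^ k - |b| ^ k)| := by
        rw [signedPow, signedPow]; ring_nf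
    _ ≤ |a - b| * |a| ^ k + |b| * (|a| ^ k - |b| ^ k) := by
        refine (abs_add_le _ _).trans_eq ?_
        rw [abs_mul, abs_mul, abs_pow, abs_abs, abs_of_nonneg hk]
    _ ≤ (k + 1) * |a - b| * max |a| |b| ^ k := by
        rw [max_eq_left hba]; linarith

lemma mul_signedPow_add_sub_le (k : ℕ) (x z : ℝ) :
    x * (signedPow k (x + z) - signedPow k z) ≤
      (k + 1) * ∑ j ∈ range (k + 1), (k.choose j : ℝ) * (|x| ^ (j + 2) * |z| ^ (k - j)) := by
  have hmax : max |x + z| |z| ≤ |x| + |z| := max_le (abs_add_le x z) (by linarith [abs_nonneg x])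
  calc x * (signedPow k (x + z) - signedPow k z)
      ≤ |x| * |signedPow k (x + z) - signedPow k z| := by rw [← abs_mul]; exact le_abs_self _
    _ ≤ |x| * ((k + 1) * |x| * (|x| + |z|) ^ k) := by
        gcongr
        refine (abs_signedPow_sub_le k _ _).trans ?_
        rw [add_sub_cancel_right]
        gcongr
    _ = (k + 1) * ∑ j ∈ range (k + 1), (k.choose j : ℝ) * (|x| ^ (j + 2) * |z| ^ (k - j)) := by
        rw [add_pow, mul_sum, mul_sum, mul_sum]
        refine sum_congr rfl fun j _ => ?_
        ring

lemma one_add_pow_le {k : ℕ} {y : ℝ} (hy : 0 ≤ y) (hky : k * y ≤ 1) :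
    (1 + y) ^ k ≤ 1 + k * y + (k * y) ^ 2 := by
  induction k with
  | zero => simp
  | succ k ih =>
    push_cast at hky ⊢
    have hk : (0 : ℝ) ≤ k := k.cast_nonneg
    have := mul_le_mul_of_nonneg_right (ih (by nlinarith)) (by linarith : 0 ≤ 1 + y)
    rw [pow_succ]
    nlinarith [mul_nonneg hk hy, mul_nonneg (mul_nonneg hk hk) hy]

lemma five_fourths_le_kappa : (5 / 4 : ℝ) ≤ √(exp 1) / (2 * (√(exp 1) - 1)) := by
  have h1 : 1 < √(exp 1) := by
    rw [lt_sqrt zero_le_one]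
    linarith [exp_one_gt_d9]
  have h2 : √(exp 1) ≤ 5 / 3 := by
    rw [sqrt_le_left (by norm_num)]
    linarith [exp_one_lt_d9]
  rw [le_div_iff₀ (by linarith)]
  linarith

lemma sum_choose_mul_pow_le {k : ℕ} {b : ℕ → ℝ} {c m T : ℝ} (hT : 0 ≤ T)
    (hb : ∀ j, 1 ≤ j → j ≤ k → b j ≤ c * m ^ j) :
    ∑ j ∈ range (k + 1), (k.choose j : ℝ) * b j * T ^ (k - j) ≤
      b 0 * T ^ k + c * ((T + m) ^ k - T ^ k) := by
  have hbin : (T + m) ^ k - T ^ k =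
      ∑ j ∈ range k, (k.choose (j + 1) : ℝ) * m ^ (j + 1) * T ^ (k - (j + 1)) := by
    rw [add_comm, add_pow, sum_range_succ']
    simp only [pow_zero, Nat.choose_zero_right, Nat.cast_one, one_mul, mul_one, Nat.sub_zero]
    rw [add_sub_cancel_right]
    exact sum_congr rfl fun j _ => by ring
  rw [sum_range_succ', hbin, mul_sum]
  simp only [Nat.choose_zero_right, Nat.cast_one, one_mul, Nat.sub_zero]
  rw [add_comm]
  refine (add_le_add_iff_left _).2 (sum_le_sum fun j hj => ?_)
  rw [mem_range] at hj
  calc (k.choose (j + 1) : ℝ) * b (j + 1) * T ^ (k - (j + 1))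
      ≤ (k.choose (j + 1) : ℝ) * (c * m ^ (j + 1)) * T ^ (k - (j + 1)) := by
        gcongr; exact hb _ (by omega) (by omega)
    _ = c * ((k.choose (j + 1) : ℝ) * m ^ (j + 1) * T ^ (k - (j + 1))) := by ring

lemma recursion_factor_le_one {q k : ℕ} (hkq : k + 2 ≤ q) {u y : ℝ} (hy : 0 ≤ y)
    (hqu : 5 * q * u ≤ 1) (hqy : 25 * (q * y) ^ 2 ≤ 8) :
    (k + 1) * (u + (2 * u + y ^ 2) * ((1 + y) ^ k - 1)) ≤ 1 := by
  have hkq' : (k : ℝ) + 2 ≤ q := by exact_mod_cast hkq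
  have hk : (0 : ℝ) ≤ k := k.cast_nonneg
  have hky : k * y ≤ q * y := by gcongr; linarith
  have hky' : k * y ≤ 3 / 5 := by nlinarith [mul_nonneg hk hy]
  have hP : (1 + y) ^ k - 1 ≤ 23 / 25 := by
    have := one_add_pow_le (k := k) hy (by linarith)
    nlinarith [mul_nonneg hk hy]
  have hP0 : 0 ≤ (1 + y) ^ k - 1 := sub_nonneg.2 (one_le_pow₀ (by linarith))
  have hku : (k + 1) * u ≤ 1 / 5 := by nlinarith
  have hqy2 : q * y ^ 2 ≤ 4 / 25 := by
    have h2q : (2 : ℝ) ≤ q := by linarith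
    nlinarith [mul_le_mul_of_nonneg_right h2q (by positivity : 0 ≤ q * y ^ 2)]
  have hky2 : (k + 1) * y ^ 2 ≤ 4 / 25 := by nlinarith [sq_nonneg y]
  have e : (k + 1) * (u + (2 * u + y ^ 2) * ((1 + y) ^ k - 1)) =
      (k + 1) * u + (2 * ((k + 1) * u) + (k + 1) * y ^ 2) * ((1 + y) ^ k - 1) := by ring
  rw [e]
  nlinarith [mul_le_mul_of_nonneg_right hku hP0, mul_le_mul_of_nonneg_right hky2 hP0]

lemma recursion_bound_le {q k : ℕ} (hkq : k + 2 ≤ q) {s m T : ℝ} (hm : 0 ≤ m) (hT : 0 < T)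
    (hsT : 5 * q * s ≤ T ^ 2) (hmT : 25 * q ^ 2 * m ^ 2 ≤ 8 * T ^ 2) :
    (k + 1) * (s * T ^ k + (2 * s + m ^ 2) * ((T + m) ^ k - T ^ k)) ≤ T ^ (k + 2) := by
  obtain ⟨u, rfl⟩ : ∃ u, s = u * T ^ 2 := ⟨s / T ^ 2, by field_simp⟩
  obtain ⟨y, rfl⟩ : ∃ y, m = y * T := ⟨m / T, by field_simp⟩
  have hT2 : 0 < T ^ 2 := by positivity
  have hy : 0 ≤ y := nonneg_of_mul_nonneg_left hm hT
  have hqu : 5 * q * u ≤ 1 := by nlinarith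
  have hqy : 25 * (q * y) ^ 2 ≤ 8 := by nlinarith
  calc (k + 1) * (u * T ^ 2 * T ^ k + (2 * (u * T ^ 2) + (y * T) ^ 2) * ((T + y * T) ^ k - T ^ k))
      = (k + 1) * (u + (2 * u + y ^ 2) * ((1 + y) ^ k - 1)) * T ^ (k + 2) := by
        rw [show T + y * T = (1 + y) * T by ring, mul_pow (1 + y) T k]; ring
    _ ≤ T ^ (k + 2) :=
        mul_le_of_le_one_left (by positivity) (recursion_factor_le_one hkq hy hqu hqy)

-- Above the level `t` the factor `x² / t²` is at least `1` (Chebyshev, pointwise).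
lemma pow_add_two_le_truncated {x y t : ℝ} (hx : 0 ≤ x) (hy : 0 ≤ y) (ht : 0 < t) (j : ℕ) :
    x ^ (j + 2) ≤
      t ^ j * x ^ 2 + x ^ 2 / t ^ 2 * y ^ (j + 2) + (if y < x then x ^ (j + 2) else 0) := by
  have h1 : 0 ≤ t ^ j * x ^ 2 := by positivity
  have h2 : 0 ≤ x ^ 2 / t ^ 2 * y ^ (j + 2) := by positivity
  rcases le_or_gt x t with hxt | htx
  · have : x ^ (j + 2) ≤ t ^ j * x ^ 2 := by rw [pow_add]; gcongr
    split_ifs <;> linarith [pow_nonneg hx (j + 2)]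
  split_ifs with hyx
  · linarith
  · have hxy : x ^ (j + 2) ≤ y ^ (j + 2) := pow_le_pow_left₀ hx (not_lt.1 hyx) _
    have : 1 ≤ x ^ 2 / t ^ 2 := by rw [one_le_div (by positivity)]; gcongr
    nlinarith [pow_nonneg hy (j + 2)]

lemma mul_pow_le_pow_add_pow {a b : ℝ} (ha : 0 ≤ a) (hb : 0 ≤ b) (n : ℕ) :
    a * b ^ n ≤ a ^ (n + 1) + b ^ (n + 1) := by
  rcases le_total a b with hab | hba
  · have : a * b ^ n ≤ b ^ (n + 1) := by rw [pow_succ']; gcongr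
    linarith [pow_nonneg ha (n + 1)]
  · have : a * b ^ n ≤ a ^ (n + 1) := by rw [pow_succ']; gcongr
    linarith [pow_nonneg hb (n + 1)]

section SupExcept

variable {ι : Type*} [Fintype ι] [DecidableEq ι]

-- For `ι = {i}` this is the empty supremum `0`, hence the nonnegativity hypotheses below.
noncomputable def supExcept (a : ι → ℝ) (i : ι) : ℝ := ⨆ j : (univ.erase i : Finset ι), a j

lemma le_supExcept (a : ι → ℝ) {i j : ι} (h : j ≠ i) : a j ≤ supExcept a i :=
  le_ciSup (f := fun j : (univ.erase i : Finset ι) => a j) (Set.finite_range _).bddAbove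
    ⟨j, mem_erase.2 ⟨h, mem_univ j⟩⟩

lemma supExcept_nonneg {a : ι → ℝ} (ha : ∀ j, 0 ≤ a j) (i : ι) : 0 ≤ supExcept a i :=
  Real.iSup_nonneg fun j => ha j

lemma supExcept_le_iSup {a : ι → ℝ} (ha : ∀ j, 0 ≤ a j) (i : ι) : supExcept a i ≤ ⨆ j, a j :=
  Real.iSup_le (fun j => le_ciSup (Set.finite_range a).bddAbove j.1) (Real.iSup_nonneg ha)

lemma sum_ite_supExcept_lt_le {a : ι → ℝ} (ha : ∀ j, 0 ≤ a j) (l : ℕ) :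
    ∑ i, (if supExcept a i < a i then a i ^ l else 0) ≤ (⨆ j, a j) ^ l := by
  by_cases h : ∃ i, supExcept a i < a i
  · obtain ⟨i, hi⟩ := h
    rw [sum_eq_single i, if_pos hi]
    · exact pow_le_pow_left₀ (ha i) (le_ciSup (Set.finite_range a).bddAbove i) l
    · intro j _ hji
      have := le_supExcept a hji
      have := le_supExcept a hji.symm
      rw [if_neg (by linarith)]
    · simp
  · simp only [not_exists, not_lt] at h
    rw [sum_eq_zero fun i _ => if_neg (not_lt.2 (h i))]
    exact pow_nonneg (Real.iSup_nonneg ha) l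

end SupExcept

section Moments

variable {Ω ι : Type*} [MeasurableSpace Ω] {μ : Measure Ω} {X : ι → Ω → ℝ}

lemma memLp_of_integrable_abs_rpow {f : Ω → ℝ} (hf : AEStronglyMeasurable f μ)
    (h : ∀ p : ℝ, 0 < p → Integrable (fun ω => |f ω| ^ p) μ) (k : ℕ) : MemLp f k μ := by
  rcases k.eq_zero_or_pos with rfl | hk
  · rw [Nat.cast_zero]
    exact memLp_zero_iff_aestronglyMeasurable.2 hf
  · exact (integrable_norm_rpow_iff hf (by positivity) (by simp)).1
      (by simpa using h k (by positivity))

lemma integrable_abs_pow [IsFiniteMeasure μ] {f : Ω → ℝ} {k : ℕ} (hf : MemLp f k μ) :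
    Integrable (fun ω => |f ω| ^ k) μ := by
  simpa using hf.integrable_norm_pow'

lemma integrable_pow_of_nonneg [IsFiniteMeasure μ] {f : Ω → ℝ} {k : ℕ} (hf : MemLp f k μ)
    (h0 : ∀ ω, 0 ≤ f ω) : Integrable (fun ω => f ω ^ k) μ := by
  simpa only [abs_of_nonneg (h0 _)] using integrable_abs_pow hf

lemma integral_abs_pow_le_pow [IsProbabilityMeasure μ] {f : Ω → ℝ} {l q : ℕ} {T : ℝ}
    (hf : MemLp f q μ) (hl : l ≠ 0) (hlq : l ≤ q) (hT : 0 ≤ T)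
    (h : ∫ ω, |f ω| ^ q ∂μ ≤ T ^ q) : ∫ ω, |f ω| ^ l ∂μ ≤ T ^ l := by
  have hq : q ≠ 0 := by omega
  have hmono := eLpNorm_le_eLpNorm_of_exponent_le (μ := μ) (p := l) (q := q) (mod_cast hlq)
    hf.aestronglyMeasurable
  rw [(hf.mono_exponent (mod_cast hlq)).eLpNorm_eq_integral_rpow_norm (by simpa) (by simp),
    hf.eLpNorm_eq_integral_rpow_norm (by simpa) (by simp),
    ENNReal.ofReal_le_ofReal_iff (by positivity)] at hmono
  simp only [ENNReal.toReal_natCast, Real.norm_eq_abs, Real.rpow_natCast] at hmono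
  have hqT : (∫ ω, |f ω| ^ q ∂μ) ^ (q : ℝ)⁻¹ ≤ T :=
    calc (∫ ω, |f ω| ^ q ∂μ) ^ (q : ℝ)⁻¹ ≤ (T ^ q) ^ (q : ℝ)⁻¹ := by gcongr
      _ = T := pow_rpow_inv_natCast hT hq
  have hl0 : 0 ≤ ∫ ω, |f ω| ^ l ∂μ := integral_nonneg fun ω => by positivity
  calc ∫ ω, |f ω| ^ l ∂μ = ((∫ ω, |f ω| ^ l ∂μ) ^ (l : ℝ)⁻¹) ^ l :=
        (rpow_inv_natCast_pow hl0 hl).symm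
    _ ≤ T ^ l := by gcongr; exact hmono.trans hqT

lemma lqNorm_le_of_integral_abs_pow_le {f : Ω → ℝ} {q : ℕ} (hq : q ≠ 0) {T : ℝ} (hT : 0 ≤ T)
    (h : ∫ ω, |f ω| ^ q ∂μ ≤ T ^ q) : lqNorm μ f q ≤ T := by
  rw [lqNorm, one_div]
  simp only [rpow_natCast]
  calc (∫ ω, |f ω| ^ q ∂μ) ^ (q : ℝ)⁻¹ ≤ (T ^ q) ^ (q : ℝ)⁻¹ := by gcongr
    _ = T := pow_rpow_inv_natCast hT hq

lemma integral_abs_pow_le_of_lqNorm_le {f : Ω → ℝ} {q : ℕ} (hq : q ≠ 0) {m : ℝ}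
    (h : lqNorm μ f q ≤ m) : ∫ ω, |f ω| ^ q ∂μ ≤ m ^ q := by
  rw [lqNorm, one_div] at h
  simp only [rpow_natCast] at h
  have h0 : 0 ≤ ∫ ω, |f ω| ^ q ∂μ := integral_nonneg fun ω => by positivity
  calc ∫ ω, |f ω| ^ q ∂μ = ((∫ ω, |f ω| ^ q ∂μ) ^ (q : ℝ)⁻¹) ^ q :=
        (rpow_inv_natCast_pow h0 hq).symm
    _ ≤ m ^ q := by gcongr

lemma lqNorm_le_lqNorm {f g : Ω → ℝ} {q : ℕ} (hg : Integrable (fun ω => |g ω| ^ q) μ)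
    (hfg : ∀ ω, |f ω| ≤ |g ω|) : lqNorm μ f q ≤ lqNorm μ g q := by
  simp only [lqNorm, rpow_natCast]
  exact rpow_le_rpow (integral_nonneg fun ω => by positivity)
    (integral_mono_of_nonneg (ae_of_all _ fun ω => by positivity) hg
      (ae_of_all _ fun ω => pow_le_pow_left₀ (abs_nonneg _) (hfg ω) q)) (by positivity)

lemma indepFun_comp_of_notMem (hX : ∀ i, Measurable (X i)) (hindep : iIndepFun X μ) {i : ι}
    {S : Finset ι} (hi : i ∉ S) {φ : ℝ → ℝ} {ψ : (S → ℝ) → ℝ} (hφ : Measurable φ)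
    (hψ : Measurable ψ) :
    IndepFun (fun ω => φ (X i ω)) (fun ω => ψ (fun j : S => X j ω)) μ :=
  (hindep.indepFun_finset {i} S (disjoint_singleton_left.2 hi) hX).comp
    (hφ.comp (measurable_pi_apply (⟨i, mem_singleton_self i⟩ : ({i} : Finset ι)))) hψ

lemma indepFun_comp_sum_of_notMem (hX : ∀ i, Measurable (X i)) (hindep : iIndepFun X μ)
    {i : ι} {S : Finset ι} (hi : i ∉ S) {φ ψ : ℝ → ℝ} (hφ : Measurable φ) (hψ : Measurable ψ) :
    IndepFun (fun ω => φ (X i ω)) (fun ω => ψ (∑ j ∈ S, X j ω)) μ := by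
  have h := (hindep.indepFun_finsetSum_of_notMem hX hi).symm.comp hφ hψ
  simpa only [Function.comp_def, Finset.sum_apply] using h

lemma memLp_sum (hmom : ∀ i (k : ℕ), MemLp (X i) k μ) (S : Finset ι) (k : ℕ) :
    MemLp (fun ω => ∑ j ∈ S, X j ω) k μ :=
  memLp_finsetSum S fun j _ => hmom j k

lemma integrable_mul_signedPow [IsFiniteMeasure μ] {f g : Ω → ℝ} {k : ℕ}
    (hf : MemLp f ↑(k + 2) μ) (hg : MemLp g ↑(k + 2) μ) :
    Integrable (fun ω => f ω * signedPow k (g ω)) μ := by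
  refine ((integrable_abs_pow hf).add (integrable_abs_pow hg)).mono'
    (hf.1.mul ((continuous_signedPow k).comp_aestronglyMeasurable hg.1))
    (ae_of_all _ fun ω => ?_)
  rw [Real.norm_eq_abs, abs_mul, abs_signedPow]
  exact mul_pow_le_pow_add_pow (abs_nonneg _) (abs_nonneg _) _

lemma integral_mul_signedPow_sum_eq_zero (hX : ∀ i, Measurable (X i)) (hindep : iIndepFun X μ)
    (hcent : ∀ i, ∫ ω, X i ω ∂μ = 0) {i : ι} {S : Finset ι} (hi : i ∉ S) (k : ℕ) :
    ∫ ω, X i ω * signedPow k (∑ j ∈ S, X j ω) ∂μ = 0 := by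
  have h := indepFun_comp_sum_of_notMem hX hindep hi measurable_id
    (continuous_signedPow k).measurable (μ := μ)
  simp only [id] at h
  rw [h.integral_fun_mul_eq_mul_integral (hX i).aestronglyMeasurable
    ((continuous_signedPow k).measurable.comp
      (measurable_sum _ fun j _ => hX j)).aestronglyMeasurable, hcent i, zero_mul]

lemma integral_mul_signedPow_le [IsProbabilityMeasure μ] [DecidableEq ι]
    (hX : ∀ i, Measurable (X i)) (hindep : iIndepFun X μ) (hcent : ∀ i, ∫ ω, X i ω ∂μ = 0)
    (hmom : ∀ i (k : ℕ), MemLp (X i) k μ) {S : Finset ι} {i : ι} (hi : i ∈ S) (k : ℕ) :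
    ∫ ω, X i ω * signedPow k (∑ j ∈ S, X j ω) ∂μ ≤
      (k + 1) * ∑ j ∈ range (k + 1), (k.choose j : ℝ) *
        ((∫ ω, |X i ω| ^ (j + 2) ∂μ) * ∫ ω, |∑ l ∈ S.erase i, X l ω| ^ (k - j) ∂μ) := by
  set Z' := fun ω => ∑ l ∈ S.erase i, X l ω
  have hi' : i ∉ S.erase i := notMem_erase i S
  have hZ : ∀ ω, ∑ j ∈ S, X j ω = X i ω + Z' ω := fun ω => (add_sum_erase S _ hi).symm
  have hint : Integrable (fun ω => X i ω * signedPow k (∑ j ∈ S, X j ω)) μ :=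
    integrable_mul_signedPow (hmom i _) (memLp_sum hmom S _)
  have hint' : Integrable (fun ω => X i ω * signedPow k (Z' ω)) μ :=
    integrable_mul_signedPow (hmom i _) (memLp_sum hmom _ _)
  have hZ'0 : ∫ ω, X i ω * signedPow k (Z' ω) ∂μ = 0 :=
    integral_mul_signedPow_sum_eq_zero hX hindep hcent hi' k
  have hprod : ∀ a b : ℕ, Integrable (fun ω => |X i ω| ^ a * |Z' ω| ^ b) μ ∧
      ∫ ω, |X i ω| ^ a * |Z' ω| ^ b ∂μ = (∫ ω, |X i ω| ^ a ∂μ) * ∫ ω, |Z' ω| ^ b ∂μ := by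
    intro a b
    have h := indepFun_comp_sum_of_notMem hX hindep hi' (measurable_abs.pow_const a)
      (measurable_abs.pow_const b) (μ := μ)
    have ha := integrable_abs_pow (hmom i a)
    have hb := integrable_abs_pow (memLp_sum hmom (S.erase i) b)
    exact ⟨h.integrable_mul ha hb, h.integral_fun_mul_eq_mul_integral ha.1 hb.1⟩
  calc ∫ ω, X i ω * signedPow k (∑ j ∈ S, X j ω) ∂μ
      = ∫ ω, X i ω * (signedPow k (X i ω + Z' ω) - signedPow k (Z' ω)) ∂μ := by
        simp_rw [mul_sub, ← hZ]
        rw [integral_sub hint hint', hZ'0, sub_zero]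
    _ ≤ ∫ ω, (k + 1) * ∑ j ∈ range (k + 1),
          (k.choose j : ℝ) * (|X i ω| ^ (j + 2) * |Z' ω| ^ (k - j)) ∂μ := by
        refine integral_mono ?_ ?_ fun ω => mul_signedPow_add_sub_le k _ _
        · simp_rw [mul_sub, ← hZ]
          exact hint.sub hint'
        · exact (integrable_finsetSum _ fun j _ => (hprod _ _).1.const_mul _).const_mul _
    _ = _ := by
        rw [integral_const_mul, integral_finsetSum _ fun j _ => (hprod _ _).1.const_mul _]
        simp_rw [integral_const_mul, (hprod _ _).2]
        rfl

lemma integral_abs_sum_pow_le_sum [IsProbabilityMeasure μ] [DecidableEq ι]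
    (hX : ∀ i, Measurable (X i)) (hindep : iIndepFun X μ) (hcent : ∀ i, ∫ ω, X i ω ∂μ = 0)
    (hmom : ∀ i (k : ℕ), MemLp (X i) k μ) (S : Finset ι) (k : ℕ) :
    ∫ ω, |∑ j ∈ S, X j ω| ^ (k + 2) ∂μ ≤
      (k + 1) * ∑ i ∈ S, ∑ j ∈ range (k + 1), (k.choose j : ℝ) *
        ((∫ ω, |X i ω| ^ (j + 2) ∂μ) * ∫ ω, |∑ l ∈ S.erase i, X l ω| ^ (k - j) ∂μ) := by
  calc ∫ ω, |∑ j ∈ S, X j ω| ^ (k + 2) ∂μ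
      = ∑ i ∈ S, ∫ ω, X i ω * signedPow k (∑ j ∈ S, X j ω) ∂μ := by
        rw [← integral_finsetSum S fun i _ =>
          integrable_mul_signedPow (hmom i _) (memLp_sum hmom S _)]
        simp_rw [← sum_mul, mul_signedPow_self]
    _ ≤ _ := sum_le_sum fun i hi => integral_mul_signedPow_le hX hindep hcent hmom hi k
    _ = _ := (mul_sum ..).symm

lemma integral_abs_sum_sq_le [IsProbabilityMeasure μ] [DecidableEq ι]
    (hX : ∀ i, Measurable (X i)) (hindep : iIndepFun X μ) (hcent : ∀ i, ∫ ω, X i ω ∂μ = 0)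
    (hmom : ∀ i (k : ℕ), MemLp (X i) k μ) (S : Finset ι) :
    ∫ ω, |∑ j ∈ S, X j ω| ^ 2 ∂μ ≤ ∑ i ∈ S, ∫ ω, |X i ω| ^ 2 ∂μ := by
  simpa using integral_abs_sum_pow_le_sum hX hindep hcent hmom S 0

lemma integral_abs_sum_pow_add_two_le [IsProbabilityMeasure μ] [DecidableEq ι]
    (hX : ∀ i, Measurable (X i)) (hindep : iIndepFun X μ) (hcent : ∀ i, ∫ ω, X i ω ∂μ = 0)
    (hmom : ∀ i (k : ℕ), MemLp (X i) k μ) {q k : ℕ} (hkq : k + 2 ≤ q) {s m T : ℝ}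
    (hm : 0 ≤ m) (hT : 0 < T) (hsT : 5 * q * s ≤ T ^ 2) (hmT : 25 * q ^ 2 * m ^ 2 ≤ 8 * T ^ 2)
    {S : Finset ι} (hW₂ : ∑ i ∈ S, ∫ ω, |X i ω| ^ 2 ∂μ ≤ s)
    (hW : ∀ j, 1 ≤ j → j ≤ k → ∑ i ∈ S, ∫ ω, |X i ω| ^ (j + 2) ∂μ ≤ (2 * s + m ^ 2) * m ^ j)
    (ih : ∀ j ≤ k, ∀ i ∈ S, ∫ ω, |∑ l ∈ S.erase i, X l ω| ^ j ∂μ ≤ T ^ j) :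
    ∫ ω, |∑ i ∈ S, X i ω| ^ (k + 2) ∂μ ≤ T ^ (k + 2) :=
  calc ∫ ω, |∑ i ∈ S, X i ω| ^ (k + 2) ∂μ
      ≤ (k + 1) * ∑ i ∈ S, ∑ j ∈ range (k + 1), (k.choose j : ℝ) *
          ((∫ ω, |X i ω| ^ (j + 2) ∂μ) * T ^ (k - j)) := by
        refine (integral_abs_sum_pow_le_sum hX hindep hcent hmom S k).trans ?_
        gcongr with i hi j hj
        exact ih _ (by omega) i hi
    _ = (k + 1) * ∑ j ∈ range (k + 1), (k.choose j : ℝ) *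
          (∑ i ∈ S, ∫ ω, |X i ω| ^ (j + 2) ∂μ) * T ^ (k - j) := by
        rw [sum_comm]
        congr 1
        refine sum_congr rfl fun j _ => ?_
        rw [mul_sum, sum_mul]
        exact sum_congr rfl fun i _ => by ring
    _ ≤ (k + 1) * (s * T ^ k + (2 * s + m ^ 2) * ((T + m) ^ k - T ^ k)) := by
        gcongr
        exact (sum_choose_mul_pow_le hT.le hW).trans (by gcongr)
    _ ≤ T ^ (k + 2) := recursion_bound_le hkq hm hT hsT hmT

lemma memLp_iSup_abs [Fintype ι] (hX : ∀ i, Measurable (X i))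
    (hmom : ∀ i (k : ℕ), MemLp (X i) k μ) (k : ℕ) : MemLp (fun ω => ⨆ i, |X i ω|) k μ := by
  refine (memLp_finsetSum univ fun i _ => (hmom i k).norm).mono
    (Measurable.iSup fun i => (hX i).abs).aestronglyMeasurable (ae_of_all _ fun ω => ?_)
  have hsum : 0 ≤ ∑ i, ‖X i ω‖ := sum_nonneg fun i _ => norm_nonneg _
  rw [Real.norm_of_nonneg (Real.iSup_nonneg fun i => abs_nonneg _), Real.norm_of_nonneg hsum]
  exact Real.iSup_le (fun i => single_le_sum (f := fun i => ‖X i ω‖)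
    (fun i _ => norm_nonneg _) (mem_univ i)) hsum

lemma measurable_supExcept_abs [Fintype ι] [DecidableEq ι] (hX : ∀ i, Measurable (X i))
    (i : ι) : Measurable fun ω => supExcept (fun l => |X l ω|) i :=
  Measurable.iSup fun l => (hX l).abs

lemma memLp_supExcept_abs [Fintype ι] [DecidableEq ι] (hX : ∀ i, Measurable (X i))
    (hmom : ∀ i (k : ℕ), MemLp (X i) k μ) (i : ι) (k : ℕ) :
    MemLp (fun ω => supExcept (fun l => |X l ω|) i) k μ := by
  refine (memLp_iSup_abs hX hmom k).mono (measurable_supExcept_abs hX i).aestronglyMeasurable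
    (ae_of_all _ fun ω => ?_)
  have h0 := supExcept_nonneg (fun l => abs_nonneg (X l ω)) i
  have hle := supExcept_le_iSup (fun l => abs_nonneg (X l ω)) i
  rw [Real.norm_of_nonneg h0, Real.norm_of_nonneg (h0.trans hle)]
  exact hle

lemma indepFun_supExcept_abs [Fintype ι] [DecidableEq ι] (hX : ∀ i, Measurable (X i))
    (hindep : iIndepFun X μ) (i : ι) :
    IndepFun (X i) (fun ω => supExcept (fun l => |X l ω|) i) μ :=
  indepFun_comp_of_notMem hX hindep (notMem_erase i univ) measurable_id
    (Measurable.iSup fun l => (measurable_pi_apply l).abs) (ψ := fun v => ⨆ l, |v l|)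

lemma integral_abs_pow_le_truncated [IsProbabilityMeasure μ] {f g : Ω → ℝ} {j : ℕ}
    (hf : Measurable f) (hg : Measurable g) (hfg : IndepFun f g μ) (hf₂ : MemLp f ↑(j + 2) μ)
    (hg₂ : MemLp g ↑(j + 2) μ) (hg0 : ∀ ω, 0 ≤ g ω) {t : ℝ} (ht : 0 < t)
    (hgt : ∫ ω, g ω ^ (j + 2) ∂μ ≤ t ^ (j + 2)) :
    ∫ ω, |f ω| ^ (j + 2) ∂μ ≤ 2 * t ^ j * ∫ ω, f ω ^ 2 ∂μ +
      ∫ ω, {ω | g ω < |f ω|}.indicator (fun ω => |f ω| ^ (j + 2)) ω ∂μ := by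
  set E := {ω | g ω < |f ω|}.indicator (fun ω => |f ω| ^ (j + 2))
  have hE : Integrable E μ := (integrable_abs_pow hf₂).indicator (measurableSet_lt hg hf.abs)
  have hsq : Integrable (fun ω => f ω ^ 2) μ :=
    (hf₂.mono_exponent (by norm_cast; omega)).integrable_sq
  have hgj := integrable_pow_of_nonneg hg₂ hg0
  have hind : IndepFun (fun ω => f ω ^ 2) (fun ω => g ω ^ (j + 2)) μ :=
    hfg.comp (measurable_id.pow_const 2) (measurable_id.pow_const _)
  have h₁ : Integrable (fun ω => t ^ j * f ω ^ 2) μ := hsq.const_mul _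
  have h₂ : Integrable (fun ω => f ω ^ 2 * g ω ^ (j + 2) / t ^ 2) μ :=
    (hind.integrable_mul hsq hgj).div_const _
  have h₁₂ : Integrable (fun ω => t ^ j * f ω ^ 2 + f ω ^ 2 * g ω ^ (j + 2) / t ^ 2) μ :=
    h₁.add h₂
  calc ∫ ω, |f ω| ^ (j + 2) ∂μ
      ≤ ∫ ω, (t ^ j * f ω ^ 2 + f ω ^ 2 * g ω ^ (j + 2) / t ^ 2 + E ω) ∂μ := by
        refine integral_mono (integrable_abs_pow hf₂) (h₁₂.add hE) fun ω => ?_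
        have := pow_add_two_le_truncated (abs_nonneg (f ω)) (hg0 ω) ht j
        rw [sq_abs] at this
        simpa only [E, Set.indicator_apply, Set.mem_ofPred_eq, mul_div_right_comm] using this
    _ = t ^ j * (∫ ω, f ω ^ 2 ∂μ) +
          (∫ ω, f ω ^ 2 ∂μ) * (∫ ω, g ω ^ (j + 2) ∂μ) / t ^ 2 + ∫ ω, E ω ∂μ := by
        rw [integral_add h₁₂ hE, integral_add h₁ h₂, integral_const_mul, integral_div,
          hind.integral_fun_mul_eq_mul_integral hsq.1 hgj.1]
    _ ≤ t ^ j * (∫ ω, f ω ^ 2 ∂μ) + (∫ ω, f ω ^ 2 ∂μ) * t ^ (j + 2) / t ^ 2 + ∫ ω, E ω ∂μ := by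
        gcongr
    _ = 2 * t ^ j * ∫ ω, f ω ^ 2 ∂μ + ∫ ω, E ω ∂μ := by
        field_simp
        ring

lemma sum_integral_abs_pow_le [IsProbabilityMeasure μ] [Fintype ι] [DecidableEq ι]
    (hX : ∀ i, Measurable (X i)) (hindep : iIndepFun X μ) (hmom : ∀ i (k : ℕ), MemLp (X i) k μ)
    {t : ℝ} (ht : 0 < t) (j : ℕ) (hY : ∫ ω, (⨆ i, |X i ω|) ^ (j + 2) ∂μ ≤ t ^ (j + 2)) :
    ∑ i, ∫ ω, |X i ω| ^ (j + 2) ∂μ ≤ (2 * ∑ i, ∫ ω, X i ω ^ 2 ∂μ + t ^ 2) * t ^ j := by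
  set Yi := fun i ω => supExcept (fun l => |X l ω|) i
  set E := fun i => {ω | Yi i ω < |X i ω|}.indicator (fun ω => |X i ω| ^ (j + 2))
  have hYi0 : ∀ i ω, 0 ≤ Yi i ω := fun i ω => supExcept_nonneg (fun l => abs_nonneg _) i
  have hYi_le : ∀ i ω, Yi i ω ≤ ⨆ l, |X l ω| := fun i ω =>
    supExcept_le_iSup (fun l => abs_nonneg _) i
  have hYi_meas : ∀ i, Measurable (Yi i) := measurable_supExcept_abs hX
  have hY_int : Integrable (fun ω => (⨆ i, |X i ω|) ^ (j + 2)) μ :=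
    integrable_pow_of_nonneg (memLp_iSup_abs hX hmom _) fun ω =>
      Real.iSup_nonneg fun i => abs_nonneg _
  have hYi_memLp : ∀ i, MemLp (Yi i) ↑(j + 2) μ := fun i => memLp_supExcept_abs hX hmom i _
  have hterm : ∀ i, ∫ ω, |X i ω| ^ (j + 2) ∂μ ≤ 2 * t ^ j * ∫ ω, X i ω ^ 2 ∂μ + ∫ ω, E i ω ∂μ :=
    fun i => integral_abs_pow_le_truncated (hX i) (hYi_meas i)
      (indepFun_supExcept_abs hX hindep i) (hmom i _) (hYi_memLp i) (hYi0 i) ht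
      ((integral_mono (integrable_pow_of_nonneg (hYi_memLp i) (hYi0 i)) hY_int fun ω =>
        pow_le_pow_left₀ (hYi0 i ω) (hYi_le i ω) _).trans hY)
  have hE_int : ∀ i, Integrable (E i) μ := fun i =>
    (integrable_abs_pow (hmom i _)).indicator (measurableSet_lt (hYi_meas i) (hX i).abs)
  have hE_sum : ∑ i, ∫ ω, E i ω ∂μ ≤ t ^ (j + 2) := by
    rw [← integral_finsetSum _ fun i _ => hE_int i]
    refine (integral_mono (integrable_finsetSum _ fun i _ => hE_int i) hY_int fun ω => ?_).trans hY
    simpa only [E, Set.indicator_apply, Set.mem_ofPred_eq] using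
      sum_ite_supExcept_lt_le (fun l => abs_nonneg (X l ω)) (j + 2)
  calc ∑ i, ∫ ω, |X i ω| ^ (j + 2) ∂μ
      ≤ ∑ i, (2 * t ^ j * ∫ ω, X i ω ^ 2 ∂μ + ∫ ω, E i ω ∂μ) := sum_le_sum fun i _ => hterm i
    _ ≤ 2 * t ^ j * (∑ i, ∫ ω, X i ω ^ 2 ∂μ) + t ^ (j + 2) := by
        rw [sum_add_distrib, ← mul_sum]
        gcongr
    _ = (2 * ∑ i, ∫ ω, X i ω ^ 2 ∂μ + t ^ 2) * t ^ j := by ring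

theorem integral_abs_sum_pow_le_pow [IsProbabilityMeasure μ] [Fintype ι] [DecidableEq ι]
    (hX : ∀ i, Measurable (X i)) (hindep : iIndepFun X μ) (hcent : ∀ i, ∫ ω, X i ω ∂μ = 0)
    (hmom : ∀ i (k : ℕ), MemLp (X i) k μ) {q : ℕ} {m T : ℝ} (hm : 0 < m) (hT : 0 ≤ T)
    (hY : ∫ ω, (⨆ i, |X i ω|) ^ q ∂μ ≤ m ^ q)
    (hsT : 5 * q * ∑ i, ∫ ω, X i ω ^ 2 ∂μ ≤ T ^ 2) (hmT : 25 * q ^ 2 * m ^ 2 ≤ 8 * T ^ 2)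
    {k : ℕ} (hk : k ≤ q) (S : Finset ι) : ∫ ω, |∑ i ∈ S, X i ω| ^ k ∂μ ≤ T ^ k := by
  set s := ∑ i, ∫ ω, X i ω ^ 2 ∂μ
  have hW : ∀ (S : Finset ι) (l : ℕ), ∑ i ∈ S, ∫ ω, |X i ω| ^ l ∂μ ≤ ∑ i, ∫ ω, |X i ω| ^ l ∂μ :=
    fun S l => sum_le_sum_of_subset_of_nonneg (subset_univ S) fun i _ _ =>
      integral_nonneg fun ω => by positivity
  have hW₂ : ∀ S : Finset ι, ∑ i ∈ S, ∫ ω, |X i ω| ^ 2 ∂μ ≤ s := fun S => by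
    simpa only [sq_abs] using hW S 2
  have hYabs : ∀ ω, |(⨆ i, |X i ω|)| = ⨆ i, |X i ω| := fun ω =>
    abs_of_nonneg (Real.iSup_nonneg fun i => abs_nonneg _)
  have hmoment : ∀ (S : Finset ι) (j : ℕ), j + 2 ≤ q →
      ∑ i ∈ S, ∫ ω, |X i ω| ^ (j + 2) ∂μ ≤ (2 * s + m ^ 2) * m ^ j := fun S j hj =>
    (hW S _).trans (sum_integral_abs_pow_le hX hindep hmom hm j (by
      simpa only [hYabs] using integral_abs_pow_le_pow (memLp_iSup_abs hX hmom q) (by omega) hj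
        hm.le (by simpa only [hYabs] using hY)))
  induction k using Nat.strong_induction_on generalizing S with
  | _ k ih =>
  match k, hk with
  | 0, _ => simp
  | 1, hk =>
    have hsT' : s ≤ T ^ 2 := by
      have : (1 : ℝ) ≤ q := by exact_mod_cast hk
      have : 0 ≤ s := sum_nonneg fun i _ => integral_nonneg fun ω => sq_nonneg (X i ω)
      nlinarith
    simpa using integral_abs_pow_le_pow (memLp_sum hmom S 2) one_ne_zero one_le_two hT
      (((integral_abs_sum_sq_le hX hindep hcent hmom S).trans (hW₂ S)).trans hsT')
  | k + 2, hk =>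
    have hT0 : 0 < T := by
      have : (2 : ℝ) ≤ q := by exact_mod_cast (by omega : 2 ≤ q)
      have : 0 < (q : ℝ) ^ 2 * m ^ 2 := by positivity
      exact lt_of_le_of_ne hT fun h => by subst h; linarith
    exact integral_abs_sum_pow_add_two_le hX hindep hcent hmom hk hm.le hT0 hsT hmT (hW₂ S)
      (fun j _ hj => hmoment S j (by omega)) fun j hj i _ => ih j (by omega) (by omega) _

theorem lqNorm_sum_le [IsProbabilityMeasure μ] [Fintype ι] [DecidableEq ι]
    (hX : ∀ i, Measurable (X i)) (hindep : iIndepFun X μ) (hcent : ∀ i, ∫ ω, X i ω ∂μ = 0)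
    (hmom : ∀ i (k : ℕ), MemLp (X i) k μ) {q : ℕ} (hq : q ≠ 0) {σ a b : ℝ} (hσ0 : 0 ≤ σ)
    (hσ : σ ^ 2 = ∑ i, ∫ ω, X i ω ^ 2 ∂μ) (ha0 : 0 ≤ a) (hb0 : 0 < b) (ha : 5 * q ≤ a ^ 2)
    (hb : 25 * q ^ 2 ≤ 8 * b ^ 2) :
    lqNorm μ (fun ω => ∑ i, X i ω) q ≤ σ * a + b * lqNorm μ (fun ω => ⨆ i, |X i ω|) q := by
  refine le_of_forall_pos_le_add fun ε hε => ?_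
  -- `m` is taken strictly above `‖Y‖_q` so that it can serve as a positive truncation level.
  set m := lqNorm μ (fun ω => ⨆ i, |X i ω|) q + ε / b
  have hY0 : 0 ≤ lqNorm μ (fun ω => ⨆ i, |X i ω|) q :=
    rpow_nonneg (integral_nonneg fun ω => by positivity) _
  have hm : 0 < m := add_pos_of_nonneg_of_pos hY0 (div_pos hε hb0)
  have hYm : lqNorm μ (fun ω => ⨆ i, |X i ω|) q ≤ m :=
    le_add_of_nonneg_right (div_pos hε hb0).le
  have hY : ∫ ω, (⨆ i, |X i ω|) ^ q ∂μ ≤ m ^ q := by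
    simpa only [abs_of_nonneg (Real.iSup_nonneg fun i => abs_nonneg (X i _))] using
      integral_abs_pow_le_of_lqNorm_le hq hYm
  have hσa : (σ * a) ^ 2 ≤ (σ * a + b * m) ^ 2 :=
    pow_le_pow_left₀ (by positivity) (by linarith [mul_pos hb0 hm]) 2
  have hbm : (b * m) ^ 2 ≤ (σ * a + b * m) ^ 2 :=
    pow_le_pow_left₀ (by positivity) (by linarith [mul_nonneg hσ0 ha0]) 2
  calc lqNorm μ (fun ω => ∑ i, X i ω) q ≤ σ * a + b * m := by
        refine lqNorm_le_of_integral_abs_pow_le hq (by positivity)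
          (integral_abs_sum_pow_le_pow hX hindep hcent hmom hm (by positivity) hY ?_ ?_ le_rfl univ)
        · rw [← hσ]
          nlinarith [mul_le_mul_of_nonneg_left ha (sq_nonneg σ)]
        · nlinarith [mul_le_mul_of_nonneg_right hb (sq_nonneg m)]
    _ = σ * a + b * lqNorm μ (fun ω => ⨆ i, |X i ω|) q + ε := by
        simp only [m]
        field_simp
        ring

end Moments

end Rosenthal

theorem theorem9_rosenthal_centered_general
    {Ω : Type*} [MeasurableSpace Ω]
    (μ : Measure Ω) [IsProbabilityMeasure μ] (n : ℕ)
    (X : Fin n → Ω → ℝ)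
    (hX : ∀ i, Measurable (X i))
    (hcentered : ∀ i, ∫ ω, X i ω ∂μ = 0)
    (hindep : iIndepFun X μ)
    (Z : Ω → ℝ) (hZ : Z = fun ω => ∑ i, X i ω)
    (σ : ℝ) (hσnonneg : 0 ≤ σ) (hσ : σ ^ 2 = ∑ i, ∫ ω, X i ω ^ 2 ∂μ)
    (Y : Ω → ℝ) (hY : Y = fun ω => ⨆ i, |X i ω|)
    -- all indicated expectations are assumed finite
    (hmom : ∀ i, ∀ q : ℝ, 0 < q → Integrable (fun ω => |X i ω| ^ q) μ)
    (κ : ℝ) (hκ : κ = Real.sqrt (Real.exp 1) / (2 * (Real.sqrt (Real.exp 1) - 1)))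
    (q : ℕ) (hq : 2 ≤ q) (θ : ℝ) (hθ : θ ∈ Set.Ioo (0 : ℝ) 1) :
    lqNorm μ (fun ω => max (Z ω) 0) q ≤
      σ * Real.sqrt (2 * κ * (2 + θ) * q) +
        q * κ * Real.sqrt (1 + 1 / θ) * lqNorm μ Y q := by
  obtain ⟨hθ0, hθ1⟩ := hθ
  subst hZ hY
  have hmemLp : ∀ i (k : ℕ), MemLp (X i) k μ := fun i =>
    Rosenthal.memLp_of_integrable_abs_rpow (hX i).aestronglyMeasurable (hmom i)
  have hκ' : 5 / 4 ≤ κ := hκ ▸ Rosenthal.five_fourths_le_kappa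
  have ha : 5 * q ≤ √(2 * κ * (2 + θ) * q) ^ 2 := by
    have h5 : (5 : ℝ) ≤ 2 * κ * (2 + θ) := by nlinarith
    rw [sq_sqrt (by positivity)]
    nlinarith [mul_le_mul_of_nonneg_right h5 q.cast_nonneg]
  have hb : 25 * q ^ 2 ≤ 8 * (q * κ * √(1 + 1 / θ)) ^ 2 := by
    have hθ' : 1 ≤ 1 / θ := by rw [le_div_iff₀ hθ0]; linarith
    have h25 : 25 / 8 ≤ κ ^ 2 * (1 + 1 / θ) := by nlinarith
    rw [mul_pow, mul_pow, sq_sqrt (by positivity)]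
    nlinarith [mul_le_mul_of_nonneg_left h25 (sq_nonneg (q : ℝ))]
  have hpos : ∀ ω, |max (∑ i, X i ω) 0| ≤ |∑ i, X i ω| := fun ω => by
    rw [abs_of_nonneg (le_max_right _ _)]
    exact max_le (le_abs_self _) (abs_nonneg _)
  exact (Rosenthal.lqNorm_le_lqNorm
    (Rosenthal.integrable_abs_pow (Rosenthal.memLp_sum hmemLp univ q)) hpos).trans
    (Rosenthal.lqNorm_sum_le hX hindep hcentered hmemLp (by omega) hσnonneg hσ (sqrt_nonneg _)
      (by positivity) ha hb)

/-- **Theorem 9** (Rosenthal-type inequality for sums of independent centered random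
variables). With `Z = ∑ Xᵢ`, `σ² = ∑ E[Xᵢ²]` and `Y = maxᵢ |Xᵢ|`, for every integer `q ≥ 2`
and `θ ∈ (0,1)`, `‖Z₊‖_q ≤ σ √(2 κ (2+θ) q) + q κ √(1 + 1/θ) ‖Y‖_q`. -/
theorem theorem9_rosenthal_centered
    {Ω : Type*} [MeasurableSpace Ω]
    (μ : Measure Ω) [IsProbabilityMeasure μ] (n : ℕ) (hn : 0 < n)
    (X : Fin n → Ω → ℝ)
    (hX : ∀ i, Measurable (X i))
    (hcentered : ∀ i, ∫ ω, X i ω ∂μ = 0)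
    (hindep : iIndepFun X μ)
    (Z : Ω → ℝ) (hZ : Z = fun ω => ∑ i, X i ω)
    (σ : ℝ) (hσnonneg : 0 ≤ σ) (hσ : σ ^ 2 = ∑ i, ∫ ω, X i ω ^ 2 ∂μ)
    (Y : Ω → ℝ) (hY : Y = fun ω => ⨆ i, |X i ω|)
    -- all indicated expectations are assumed finite
    (hmom : ∀ i, ∀ q : ℝ, 0 < q → Integrable (fun ω => |X i ω| ^ q) μ)
    (κ : ℝ) (hκ : κ = Real.sqrt (Real.exp 1) / (2 * (Real.sqrt (Real.exp 1) - 1)))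
    (q : ℕ) (hq : 2 ≤ q) (θ : ℝ) (hθ : θ ∈ Set.Ioo (0 : ℝ) 1) :
    lqNorm μ (fun ω => max (Z ω) 0) q ≤
      σ * Real.sqrt (2 * κ * (2 + θ) * q) +
        q * κ * Real.sqrt (1 + 1 / θ) * lqNorm μ Y q :=
  theorem9_rosenthal_centered_general μ n X hX hcentered hindep Z hZ σ hσnonneg hσ Y hY hmom κ hκ q
    hq θ hθ
end
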